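/- Fix M ≥ 1 and suppose k(K) is a family of solutions of the FD2M dispersion relation ∑_{p=1}^{M} ([(2p-3)!!]²/(2p-1)!) sin^{2p-1}(k h / 2) = K/2 (with K = k_ex h) satisfying k = k_ex(1 + O(K^τ)) for some τ > 0 as K → 0. Then in fact k = k_ex(1 + ([(2M-1)!!]²/(2^{2M}(2M+1)!)) K^{2M} + O(K^{2M+2})), i.e., the dispersion error of the physical mode of the FD2M scheme is of order 2M. -/

import Mathlib

open Nat Finset Real Filter Asymptotics Topology

/-!
The FD2M dispersion polynomial `∑_{p=1}^{M} [(2p-3)!!]²/(2p-1)! s^{2p-1}` is the Taylor polynomial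
of `arcsin` of degree `2M - 1`: integrate the binomial series of `(1 - s²)^(-1/2)` term by term.
So with `x = k h / 2` the relation reads `x - K/2 = c_M x^{2M+1} + O(x^{2M+3})`, where `c_M` is the
next arcsin coefficient. Dividing by `K/2` and writing `q = k / k_ex` gives
`q - 1 = 4^{-M} c_M K^{2M} q^{2M+1} + O(K^{2M+2})`. The hypothesis on the physical mode says
`q → 1`, so first `q - 1 = O(K^{2M})`, and then replacing `q^{2M+1}` by `1` costs only
`O(K^{4M}) ⊆ O(K^{2M+2})`.
-/

/-- `(1 - u) ^ (-1 / 2) = ∑ n, invSqrtCoeff n * u ^ n` for `|u| < 1`. -/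
noncomputable def invSqrtCoeff (n : ℕ) : ℝ := ((2 * n - 1)‼ : ℝ) / 2 ^ n / n !

noncomputable def arcsinCoeff (n : ℕ) : ℝ := invSqrtCoeff n / (2 * n + 1)

noncomputable def arcsinTaylor (N : ℕ) (s : ℝ) : ℝ :=
  ∑ n ∈ range N, arcsinCoeff n * s ^ (2 * n + 1)

lemma ascPochhammer_eval_half (n : ℕ) :
    (ascPochhammer ℝ n).eval (1 / 2) = ((2 * n - 1)‼ : ℝ) / 2 ^ n := by
  induction n with
  | zero => simp
  | succ n ih =>
    rw [ascPochhammer_succ_eval, ih]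
    rcases n with _ | n
    · norm_num
    · rw [show 2 * (n + 1 + 1) - 1 = 2 * (n + 1) - 1 + 2 by omega, Nat.doubleFactorial_add_two]
      push_cast [show 2 * (n + 1) - 1 = 2 * n + 1 by omega]
      ring

lemma choose_half_add_sub_one (n : ℕ) :
    Ring.choose ((1 / 2 : ℝ) + n - 1) n = invSqrtCoeff n := by
  have h := Ring.factorial_nsmul_multichoose_eq_ascPochhammer (1 / 2 : ℝ) n
  rw [Polynomial.ascPochhammer_smeval_eq_eval, ascPochhammer_eval_half, nsmul_eq_mul,
    Ring.multichoose_eq] at h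
  rw [invSqrtCoeff, ← h, mul_div_cancel_left₀ _ (by positivity)]

lemma doubleFactorial_sq_div_factorial (n : ℕ) :
    ((2 * n - 1)‼ : ℝ) ^ 2 / (2 * n + 1)! = arcsinCoeff n := by
  have hfac : (2 * n + 1)! = (2 * n + 1) * (2 * n - 1)‼ * (2 ^ n * n !) := by
    rw [Nat.factorial_eq_mul_doubleFactorial, Nat.doubleFactorial_add_one,
      Nat.doubleFactorial_two_mul]
  have hpos : (0 : ℝ) < (2 * n - 1)‼ := by exact_mod_cast Nat.doubleFactorial_pos _
  rw [arcsinCoeff, invSqrtCoeff, hfac]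
  push_cast
  field_simp

lemma sum_Icc_doubleFactorial_eq_arcsinTaylor (M : ℕ) (s : ℝ) :
    ∑ p ∈ Icc 1 M, ((2 * p - 3)‼ : ℝ) ^ 2 / (2 * p - 1)! * s ^ (2 * p - 1) =
      arcsinTaylor M s := by
  rw [← Ico_add_one_right_eq_Icc, sum_Ico_eq_sum_range, add_tsub_cancel_right, arcsinTaylor]
  refine sum_congr rfl fun n _ => ?_
  rw [show 2 * (1 + n) - 3 = 2 * n - 1 by omega, show 2 * (1 + n) - 1 = 2 * n + 1 by omega,
    doubleFactorial_sq_div_factorial]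

lemma isBigO_pow_pow_of_le {l : Filter ℝ} (hl : l ≤ 𝓝 0) {i j : ℕ} (hij : i ≤ j) :
    (fun x : ℝ => x ^ j) =O[l] (· ^ i) := by
  rcases hij.eq_or_lt with rfl | hlt
  · exact isBigO_refl _ _
  · exact (isLittleO_pow_pow hlt).isBigO.mono hl

lemma isBigO_pow_succ_of_deriv {f : ℝ → ℝ} {n : ℕ} (hf : ∀ᶠ x in 𝓝 0, DifferentiableAt ℝ f x)
    (hf' : deriv f =O[𝓝 0] (· ^ n)) (hf₀ : f 0 = 0) : f =O[𝓝 0] (· ^ (n + 1)) := by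
  have hfd : fderiv ℝ f =O[𝓝 0] fun x => ‖x - 0‖ ^ (n : ℝ) := by
    simp only [sub_zero, Real.rpow_natCast, Real.norm_eq_abs, ← abs_pow, isBigO_abs_right]
    exact isBigO_norm_left.1 <|
      (isBigO_norm_left.2 hf').congr_left fun x => norm_deriv_eq_norm_fderiv
  have h := isBigO_norm_rpow_add_one_of_fderiv_of_apply_eq_zero (Nat.cast_nonneg n) hf hfd hf₀
  simpa only [sub_zero, ← Nat.cast_add_one, Real.rpow_natCast, Real.norm_eq_abs, ← abs_pow,
    isBigO_abs_right] using h

lemma isBigO_one_div_sqrt_one_sub_sub_sum (N : ℕ) :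
    (fun u : ℝ => 1 / √(1 - u) - ∑ n ∈ range N, invSqrtCoeff n * u ^ n) =O[𝓝 0] (· ^ N) := by
  have h := (one_div_one_sub_rpow_hasFPowerSeriesOnBall_zero (1 / 2)).hasFPowerSeriesAt
    |>.isBigO_sub_partialSum_pow N
  simp only [zero_add, FormalMultilinearSeries.partialSum,
    FormalMultilinearSeries.ofScalars_apply_eq, choose_half_add_sub_one, smul_eq_mul,
    Real.norm_eq_abs, ← abs_pow, isBigO_abs_right] at h
  simpa [Real.sqrt_eq_rpow, mul_comm] using h

lemma hasDerivAt_arcsinTaylor (N : ℕ) (s : ℝ) :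
    HasDerivAt (arcsinTaylor N) (∑ n ∈ range N, invSqrtCoeff n * s ^ (2 * n)) s := by
  refine (HasDerivAt.fun_sum fun n _ => (hasDerivAt_pow _ s).const_mul _).congr_deriv ?_
  refine sum_congr rfl fun n _ => ?_
  rw [arcsinCoeff]
  push_cast
  field_simp

lemma isBigO_arcsin_sub_arcsinTaylor (N : ℕ) :
    (fun s => arcsin s - arcsinTaylor N s) =O[𝓝 0] (· ^ (2 * N + 1)) := by
  have hI : ∀ᶠ s in 𝓝 (0 : ℝ), s ∈ Set.Ioo (-1) 1 := Ioo_mem_nhds (by norm_num) (by norm_num)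
  have hderiv : ∀ᶠ s in 𝓝 (0 : ℝ), HasDerivAt (fun s => arcsin s - arcsinTaylor N s)
      (1 / √(1 - s ^ 2) - ∑ n ∈ range N, invSqrtCoeff n * (s ^ 2) ^ n) s := by
    filter_upwards [hI] with s hs
    simp only [← pow_mul]
    exact (hasDerivAt_arcsin hs.1.ne' hs.2.ne).sub (hasDerivAt_arcsinTaylor N s)
  have hsq : Tendsto (fun s : ℝ => s ^ 2) (𝓝 0) (𝓝 0) := by
    simpa using (continuous_pow 2).tendsto (0 : ℝ)
  refine isBigO_pow_succ_of_deriv (hderiv.mono fun s hs => hs.differentiableAt) ?_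
    (by simp [arcsinTaylor])
  refine ((isBigO_one_div_sqrt_one_sub_sub_sum N).comp_tendsto hsq).congr'
    (hderiv.mono fun s hs => hs.deriv.symm) (.of_forall fun s => ?_)
  simp [pow_mul]

lemma isBigO_sub_arcsinTaylor_sin (N : ℕ) :
    (fun x => x - arcsinTaylor N (sin x)) =O[𝓝 0] (· ^ (2 * N + 1)) := by
  have hsin : (fun x => sin x ^ (2 * N + 1)) =O[𝓝 0] (· ^ (2 * N + 1)) :=
    isBigO_of_le _ fun x => by
      simpa only [norm_pow] using pow_le_pow_left₀ (norm_nonneg _) abs_sin_le_abs _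
  have hI : ∀ᶠ x in 𝓝 (0 : ℝ), x ∈ Set.Icc (-(π / 2)) (π / 2) :=
    Icc_mem_nhds (by linarith [pi_pos]) (by linarith [pi_pos])
  refine (((isBigO_arcsin_sub_arcsinTaylor N).comp_tendsto ?_).trans hsin).congr'
    (hI.mono fun x hx => ?_) .rfl
  · simpa using continuous_sin.tendsto 0
  · simp [arcsin_sin hx.1 hx.2]

lemma isBigO_sin_sub_self : (fun x => sin x - x) =O[𝓝 0] (· ^ 3) := by
  simpa [arcsinTaylor, arcsinCoeff, invSqrtCoeff] using (isBigO_sub_arcsinTaylor_sin 1).neg_left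

lemma isBigO_sin_pow_sub_pow (n : ℕ) :
    (fun x => sin x ^ (n + 1) - x ^ (n + 1)) =O[𝓝 0] (· ^ (n + 3)) := by
  have hle (x : ℝ) :
      ‖sin x ^ (n + 1) - x ^ (n + 1)‖ ≤ ‖(sin x - x) * ((n + 1 : ℕ) * x ^ n)‖ := by
    refine (abs_pow_sub_pow_le _ _ _).trans_eq ?_
    simp [max_eq_right abs_sin_le_abs, mul_assoc, -Nat.cast_add]
  refine (isBigO_of_le _ hle).trans ?_
  simpa [← mul_assoc, mul_comm _ ((n : ℝ) + 1), ← pow_add, add_comm 3] using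
    isBigO_sin_sub_self.mul (isBigO_const_mul_self ((n + 1 : ℕ) : ℝ) (· ^ n) _)

lemma isBigO_sub_arcsinTaylor_sin_sub_pow (M : ℕ) :
    (fun x => x - arcsinTaylor M (sin x) - arcsinCoeff M * x ^ (2 * M + 1))
      =O[𝓝 0] (· ^ (2 * M + 3)) := by
  have h := (isBigO_sub_arcsinTaylor_sin (M + 1)).add
    ((isBigO_sin_pow_sub_pow (2 * M)).const_mul_left (arcsinCoeff M))
  refine h.congr (fun x => ?_) fun x => ?_
  · simp only [arcsinTaylor, sum_range_succ]
    ring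
  · ring

lemma isBigO_sub_one_add_mul_pow {l : Filter ℝ} (hl : l ≤ 𝓝 0) {q : ℝ → ℝ} {a : ℝ}
    {m p : ℕ} (hm : 2 ≤ m) (hq : Tendsto q l (𝓝 1))
    (h : (fun K => q K - 1 - a * K ^ m * q K ^ p) =O[l] (· ^ (m + 2))) :
    (fun K => q K - (1 + a * K ^ m)) =O[l] (· ^ (m + 2)) := by
  have hq_sub : (fun K => q K - 1) =O[l] (· ^ m) := by
    have hmain : (fun K => a * K ^ m * q K ^ p) =O[l] (· ^ m) := by
      simpa [mul_assoc] using ((isBigO_const_mul_self a _ l).mul ((hq.isBigO_one ℝ).pow p))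
    simpa using (h.trans (isBigO_pow_pow_of_le hl (by omega))).add hmain
  have hq_pow : (fun K => q K ^ p - 1) =O[l] (· ^ m) := by
    have hgeom : Tendsto (fun K => ∑ i ∈ range p, q K ^ i) l (𝓝 (∑ i ∈ range p, 1 ^ i)) :=
      tendsto_finsetSum _ fun i _ => hq.pow i
    simpa [geom_sum_mul] using (hgeom.isBigO_one ℝ).mul hq_sub
  have hrest : (fun K => a * K ^ m * (q K ^ p - 1)) =O[l] (· ^ (m + 2)) := by
    refine ((isBigO_const_mul_self a _ l).mul hq_pow).trans ?_
    simpa [← pow_add] using isBigO_pow_pow_of_le hl (show m + 2 ≤ m + m by omega)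
  exact (h.add hrest).congr_left fun K => by ring

lemma isBigO_dispersion_residual {M : ℕ} {kk : ℝ → ℝ}
    (hq : Tendsto (fun K => kk K / K) (𝓝[≠] 0) (𝓝 1))
    (hdisp : ∀ᶠ K in 𝓝[≠] 0, arcsinTaylor M (sin (kk K / 2)) = K / 2) :
    (fun K => kk K / K - 1 - arcsinCoeff M / 2 ^ (2 * M) * K ^ (2 * M) * (kk K / K) ^ (2 * M + 1))
      =O[𝓝[≠] 0] (· ^ (2 * M + 2)) := by
  have hne : ∀ᶠ K in 𝓝[≠] (0 : ℝ), K ≠ 0 := self_mem_nhdsWithin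
  have hx : (fun K => kk K / 2) =O[𝓝[≠] 0] id :=
    (((hq.div_const 2).isBigO_one ℝ).mul (isBigO_refl id _)).congr'
      (hne.mono fun K hK => by simp only [id]; field_simp) (.of_forall fun K => one_mul K)
  have hx₀ : Tendsto (fun K => kk K / 2) (𝓝[≠] 0) (𝓝 0) :=
    hx.trans_tendsto nhdsWithin_le_nhds
  have hE := ((isBigO_sub_arcsinTaylor_sin_sub_pow M).comp_tendsto hx₀).trans (hx.pow (2 * M + 3))
  refine (((isBigO_refl (fun K : ℝ => 2 / K) _).mul hE).congr' ?_ ?_).trans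
    (isBigO_const_mul_self 2 _ _)
  · filter_upwards [hdisp, hne] with K hK hK₀
    simp only [Function.comp, hK, div_pow]
    field_simp
    ring
  · filter_upwards [hne] with K hK₀
    simp only [id]
    field_simp
    ring

/-- Order of the numerical dispersion error of the `2M`-th order staggered FD
scheme (Theorem 5.1): if `kk K` (the discrete wavenumber times `h`, as a
function of `K = k_ex h`) solves the FD2M dispersion relation
`∑_{p=1}^{M} ([(2p-3)!!]²/(2p-1)!) sin^{2p-1}(kk K/2) = K/2` near `K = 0`
and satisfies `kk K = K(1 + O(K^τ))` for some `τ > 0`, then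
`kk K = K(1 + ([(2M-1)!!]²/(2^{2M}(2M+1)!)) K^{2M} + O(K^{2M+2}))`. -/
theorem fd2M_dispersion_order (M : ℕ) (hM : 1 ≤ M) (τ : ℝ) (hτ : 0 < τ)
    (kk : ℝ → ℝ)
    (hdisp : ∀ᶠ K in nhdsWithin (0 : ℝ) {0}ᶜ,
      ∑ p ∈ Finset.Icc 1 M,
        ((2 * p - 3)‼ : ℝ) ^ 2 / ((2 * p - 1)! : ℝ) *
          Real.sin (kk K / 2) ^ (2 * p - 1) = K / 2)
    (hphys : (fun K : ℝ => kk K / K - 1)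
        =O[nhdsWithin (0 : ℝ) {0}ᶜ] fun K : ℝ => |K| ^ τ) :
    (fun K : ℝ => kk K / K -
        (1 + ((2 * M - 1)‼ : ℝ) ^ 2 / (2 ^ (2 * M) * ((2 * M + 1)! : ℝ)) *
          K ^ (2 * M)))
      =O[nhdsWithin (0 : ℝ) {0}ᶜ] fun K : ℝ => K ^ (2 * M + 2) := by
  have hτ₀ : Tendsto (fun K : ℝ => |K| ^ τ) (𝓝[≠] 0) (𝓝 0) := by
    simpa [zero_rpow hτ.ne'] using
      ((continuous_abs.tendsto (0 : ℝ)).mono_left nhdsWithin_le_nhds).rpow_const (.inr hτ.le)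
  have hq : Tendsto (fun K => kk K / K) (𝓝[≠] 0) (𝓝 1) := by
    simpa using (hphys.trans_tendsto hτ₀).add_const 1
  have hdisp' : ∀ᶠ K in 𝓝[≠] 0, arcsinTaylor M (sin (kk K / 2)) = K / 2 := by
    simpa only [sum_Icc_doubleFactorial_eq_arcsinTaylor] using hdisp
  have hcoeff : ((2 * M - 1)‼ : ℝ) ^ 2 / (2 ^ (2 * M) * ((2 * M + 1)! : ℝ)) =
      arcsinCoeff M / 2 ^ (2 * M) := by
    rw [← doubleFactorial_sq_div_factorial, div_div, mul_comm (2 ^ (2 * M) : ℝ)]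
  rw [hcoeff]
  exact isBigO_sub_one_add_mul_pow nhdsWithin_le_nhds (by omega) hq
    (isBigO_dispersion_residual hq hdisp')
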